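/- Let F : ℝ¹² → ℝ¹² be the sl3 flip map. Then F is a homeomorphism of ℝ¹² (a continuous bijection with continuous inverse); moreover F(λx) = λ·F(x) for every real λ > 0 and every x ∈ ℝ¹², and F restricts to bijections ℚ¹² → ℚ¹² and ℤ¹² → ℤ¹². -/

import Mathlib

set_option maxHeartbeats 4000000

namespace SL3

variable {R : Type*} [Ring R] [LinearOrder R] [IsStrictOrderedRing R]

/-- `[x]_+ := max(0,x)`. -/
def posR (x : R) : R := max 0 x

/-- `[x,y,z]_+ := max(0, x, x+y, x+y+z)`. -/
def pos3R (x y z : R) : R := max (max 0 x) (max (x + y) (x + y + z))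

/-- The sl3 flip map: the transformation of sl3 shear coordinates under the flip of the
diagonal of a quadrilateral (0-indexed: the paper's `x_i` is `x (i-1)`). -/
def flipMap (x : Fin 12 → R) : Fin 12 → R :=
  ![x 1 + pos3R (x 2) (x 3) (x 0) - pos3R (x 0) (x 1) (x 2),
    -x 0 - x 1 + posR (x 0) - posR (x 2),
    x 3 + pos3R (x 0) (x 1) (x 2) - pos3R (x 2) (x 3) (x 0),
    -x 2 - x 3 + posR (x 2) - posR (x 0),
    x 4 + posR (x 0),
    x 5 + pos3R (x 0) (x 1) (x 2) - posR (x 0),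
    x 6 + x 0 + x 1 + posR (x 2) - pos3R (x 0) (x 1) (x 2),
    x 7 - posR (-(x 2)),
    x 8 + posR (x 2),
    x 9 + pos3R (x 2) (x 3) (x 0) - posR (x 2),
    x 10 + x 2 + x 3 + posR (x 0) - pos3R (x 2) (x 3) (x 0),
    x 11 - posR (-(x 0))]


/-- The inverse of the sl3 flip map. -/
def flipInv (y : Fin 12 → R) : Fin 12 → R :=
  ![-y 3 - y 0 + posR (y 3) - posR (y 1),
    y 2 + pos3R (y 3) (y 0) (y 1) - pos3R (y 1) (y 2) (y 3),
    -y 1 - y 2 + posR (y 1) - posR (y 3),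
    y 0 + pos3R (y 1) (y 2) (y 3) - pos3R (y 3) (y 0) (y 1),
    y 4 + y 0 + y 3 + posR (y 1) - pos3R (y 3) (y 0) (y 1),
    y 5 - posR (-(y 1)),
    y 6 + posR (y 1),
    y 7 + pos3R (y 1) (y 2) (y 3) - posR (y 1),
    y 8 + y 1 + y 2 + posR (y 3) - pos3R (y 1) (y 2) (y 3),
    y 9 - posR (-(y 3)),
    y 10 + posR (y 3),
    y 11 + pos3R (y 3) (y 0) (y 1) - posR (y 3)]


lemma fm0 (x : Fin 12 → R) : flipMap x 0 = x 1 + pos3R (x 2) (x 3) (x 0) - pos3R (x 0) (x 1) (x 2) := rfl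

lemma fm1 (x : Fin 12 → R) : flipMap x 1 = -x 0 - x 1 + posR (x 0) - posR (x 2) := rfl

lemma fm2 (x : Fin 12 → R) : flipMap x 2 = x 3 + pos3R (x 0) (x 1) (x 2) - pos3R (x 2) (x 3) (x 0) := rfl

lemma fm3 (x : Fin 12 → R) : flipMap x 3 = -x 2 - x 3 + posR (x 2) - posR (x 0) := rfl

lemma fm4 (x : Fin 12 → R) : flipMap x 4 = x 4 + posR (x 0) := rfl

lemma fm5 (x : Fin 12 → R) : flipMap x 5 = x 5 + pos3R (x 0) (x 1) (x 2) - posR (x 0) := rfl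

lemma fm6 (x : Fin 12 → R) : flipMap x 6 = x 6 + x 0 + x 1 + posR (x 2) - pos3R (x 0) (x 1) (x 2) := rfl

lemma fm7 (x : Fin 12 → R) : flipMap x 7 = x 7 - posR (-(x 2)) := rfl

lemma fm8 (x : Fin 12 → R) : flipMap x 8 = x 8 + posR (x 2) := rfl

lemma fm9 (x : Fin 12 → R) : flipMap x 9 = x 9 + pos3R (x 2) (x 3) (x 0) - posR (x 2) := rfl

lemma fm10 (x : Fin 12 → R) : flipMap x 10 = x 10 + x 2 + x 3 + posR (x 0) - pos3R (x 2) (x 3) (x 0) := rfl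

lemma fm11 (x : Fin 12 → R) : flipMap x 11 = x 11 - posR (-(x 0)) := rfl

lemma fi0 (y : Fin 12 → R) : flipInv y 0 = -y 3 - y 0 + posR (y 3) - posR (y 1) := rfl

lemma fi1 (y : Fin 12 → R) : flipInv y 1 = y 2 + pos3R (y 3) (y 0) (y 1) - pos3R (y 1) (y 2) (y 3) := rfl

lemma fi2 (y : Fin 12 → R) : flipInv y 2 = -y 1 - y 2 + posR (y 1) - posR (y 3) := rfl

lemma fi3 (y : Fin 12 → R) : flipInv y 3 = y 0 + pos3R (y 1) (y 2) (y 3) - pos3R (y 3) (y 0) (y 1) := rfl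

lemma fi4 (y : Fin 12 → R) : flipInv y 4 = y 4 + y 0 + y 3 + posR (y 1) - pos3R (y 3) (y 0) (y 1) := rfl

lemma fi5 (y : Fin 12 → R) : flipInv y 5 = y 5 - posR (-(y 1)) := rfl

lemma fi6 (y : Fin 12 → R) : flipInv y 6 = y 6 + posR (y 1) := rfl

lemma fi7 (y : Fin 12 → R) : flipInv y 7 = y 7 + pos3R (y 1) (y 2) (y 3) - posR (y 1) := rfl

lemma fi8 (y : Fin 12 → R) : flipInv y 8 = y 8 + y 1 + y 2 + posR (y 3) - pos3R (y 1) (y 2) (y 3) := rfl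

lemma fi9 (y : Fin 12 → R) : flipInv y 9 = y 9 - posR (-(y 3)) := rfl

lemma fi10 (y : Fin 12 → R) : flipInv y 10 = y 10 + posR (y 3) := rfl

lemma fi11 (y : Fin 12 → R) : flipInv y 11 = y 11 + pos3R (y 3) (y 0) (y 1) - posR (y 3) := rfl


section Comm
variable {S : Type*} [CommRing S] [LinearOrder S] [IsStrictOrderedRing S]

lemma posR_negEq (t : S) : posR (-t) = posR t - t := by
  simp only [posR, max_def]; split_ifs <;> linarith

lemma L1 (a b c : S) : posR (-a - b + posR a - posR c) = pos3R a b c - a - b - posR c := by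
  simp only [posR, pos3R, max_def]
  split_ifs <;> linarith

lemma L2 (a b c d : S) :
    pos3R (-a - b + posR a - posR c) (d + pos3R a b c - pos3R c d a)
      (-c - d + posR c - posR a) = pos3R a b c - a - b - c := by
  simp only [posR, pos3R, max_def]
  split_ifs <;> linarith


lemma flip_leftInv (x : Fin 12 → S) : flipInv (flipMap x) = x := by
  have e1 := L1 (x 0) (x 1) (x 2)
  have e2 := L1 (x 2) (x 3) (x 0)
  have e3 := L2 (x 0) (x 1) (x 2) (x 3)
  have e4 := L2 (x 2) (x 3) (x 0) (x 1)
  have e5 := posR_negEq (-x 0 - x 1 + posR (x 0) - posR (x 2))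
  have e6 := posR_negEq (-x 2 - x 3 + posR (x 2) - posR (x 0))
  have e7 := posR_negEq (x 0)
  have e8 := posR_negEq (x 2)
  have p1 : (0:S) ≤ posR (x 0) := le_max_left _ _
  have p2 : x 0 ≤ posR (x 0) := le_max_right _ _
  have p3 : (0:S) ≤ posR (x 2) := le_max_left _ _
  have p4 : x 2 ≤ posR (x 2) := le_max_right _ _
  funext i
  fin_cases i

  · show flipInv (flipMap x) 0 = x 0
    simp only [fi0, fm0, fm1, fm2, fm3, fm4, fm5, fm6, fm7, fm8, fm9, fm10, fm11]
    linarith [e1, e2, e3, e4, e5, e6, e7, e8, p1, p2, p3, p4]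

  · show flipInv (flipMap x) 1 = x 1
    simp only [fi1, fm0, fm1, fm2, fm3, fm4, fm5, fm6, fm7, fm8, fm9, fm10, fm11]
    linarith [e1, e2, e3, e4, e5, e6, e7, e8, p1, p2, p3, p4]

  · show flipInv (flipMap x) 2 = x 2
    simp only [fi2, fm0, fm1, fm2, fm3, fm4, fm5, fm6, fm7, fm8, fm9, fm10, fm11]
    linarith [e1, e2, e3, e4, e5, e6, e7, e8, p1, p2, p3, p4]

  · show flipInv (flipMap x) 3 = x 3
    simp only [fi3, fm0, fm1, fm2, fm3, fm4, fm5, fm6, fm7, fm8, fm9, fm10, fm11]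
    linarith [e1, e2, e3, e4, e5, e6, e7, e8, p1, p2, p3, p4]

  · show flipInv (flipMap x) 4 = x 4
    simp only [fi4, fm0, fm1, fm2, fm3, fm4, fm5, fm6, fm7, fm8, fm9, fm10, fm11]
    linarith [e1, e2, e3, e4, e5, e6, e7, e8, p1, p2, p3, p4]

  · show flipInv (flipMap x) 5 = x 5
    simp only [fi5, fm0, fm1, fm2, fm3, fm4, fm5, fm6, fm7, fm8, fm9, fm10, fm11]
    linarith [e1, e2, e3, e4, e5, e6, e7, e8, p1, p2, p3, p4]

  · show flipInv (flipMap x) 6 = x 6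
    simp only [fi6, fm0, fm1, fm2, fm3, fm4, fm5, fm6, fm7, fm8, fm9, fm10, fm11]
    linarith [e1, e2, e3, e4, e5, e6, e7, e8, p1, p2, p3, p4]

  · show flipInv (flipMap x) 7 = x 7
    simp only [fi7, fm0, fm1, fm2, fm3, fm4, fm5, fm6, fm7, fm8, fm9, fm10, fm11]
    linarith [e1, e2, e3, e4, e5, e6, e7, e8, p1, p2, p3, p4]

  · show flipInv (flipMap x) 8 = x 8
    simp only [fi8, fm0, fm1, fm2, fm3, fm4, fm5, fm6, fm7, fm8, fm9, fm10, fm11]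
    linarith [e1, e2, e3, e4, e5, e6, e7, e8, p1, p2, p3, p4]

  · show flipInv (flipMap x) 9 = x 9
    simp only [fi9, fm0, fm1, fm2, fm3, fm4, fm5, fm6, fm7, fm8, fm9, fm10, fm11]
    linarith [e1, e2, e3, e4, e5, e6, e7, e8, p1, p2, p3, p4]

  · show flipInv (flipMap x) 10 = x 10
    simp only [fi10, fm0, fm1, fm2, fm3, fm4, fm5, fm6, fm7, fm8, fm9, fm10, fm11]
    linarith [e1, e2, e3, e4, e5, e6, e7, e8, p1, p2, p3, p4]

  · show flipInv (flipMap x) 11 = x 11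
    simp only [fi11, fm0, fm1, fm2, fm3, fm4, fm5, fm6, fm7, fm8, fm9, fm10, fm11]
    linarith [e1, e2, e3, e4, e5, e6, e7, e8, p1, p2, p3, p4]


lemma flip_rightInv (y : Fin 12 → S) : flipMap (flipInv y) = y := by
  have e1 := L1 (y 3) (y 0) (y 1)
  have e2 := L1 (y 1) (y 2) (y 3)
  have e3 := L2 (y 3) (y 0) (y 1) (y 2)
  have e4 := L2 (y 1) (y 2) (y 3) (y 0)
  have e5 := posR_negEq (-y 3 - y 0 + posR (y 3) - posR (y 1))
  have e6 := posR_negEq (-y 1 - y 2 + posR (y 1) - posR (y 3))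
  have e7 := posR_negEq (y 1)
  have e8 := posR_negEq (y 3)
  have p1 : (0:S) ≤ posR (y 1) := le_max_left _ _
  have p2 : y 1 ≤ posR (y 1) := le_max_right _ _
  have p3 : (0:S) ≤ posR (y 3) := le_max_left _ _
  have p4 : y 3 ≤ posR (y 3) := le_max_right _ _
  funext i
  fin_cases i

  · show flipMap (flipInv y) 0 = y 0
    simp only [fm0, fi0, fi1, fi2, fi3, fi4, fi5, fi6, fi7, fi8, fi9, fi10, fi11]
    linarith [e1, e2, e3, e4, e5, e6, e7, e8, p1, p2, p3, p4]

  · show flipMap (flipInv y) 1 = y 1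
    simp only [fm1, fi0, fi1, fi2, fi3, fi4, fi5, fi6, fi7, fi8, fi9, fi10, fi11]
    linarith [e1, e2, e3, e4, e5, e6, e7, e8, p1, p2, p3, p4]

  · show flipMap (flipInv y) 2 = y 2
    simp only [fm2, fi0, fi1, fi2, fi3, fi4, fi5, fi6, fi7, fi8, fi9, fi10, fi11]
    linarith [e1, e2, e3, e4, e5, e6, e7, e8, p1, p2, p3, p4]

  · show flipMap (flipInv y) 3 = y 3
    simp only [fm3, fi0, fi1, fi2, fi3, fi4, fi5, fi6, fi7, fi8, fi9, fi10, fi11]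
    linarith [e1, e2, e3, e4, e5, e6, e7, e8, p1, p2, p3, p4]

  · show flipMap (flipInv y) 4 = y 4
    simp only [fm4, fi0, fi1, fi2, fi3, fi4, fi5, fi6, fi7, fi8, fi9, fi10, fi11]
    linarith [e1, e2, e3, e4, e5, e6, e7, e8, p1, p2, p3, p4]

  · show flipMap (flipInv y) 5 = y 5
    simp only [fm5, fi0, fi1, fi2, fi3, fi4, fi5, fi6, fi7, fi8, fi9, fi10, fi11]
    linarith [e1, e2, e3, e4, e5, e6, e7, e8, p1, p2, p3, p4]

  · show flipMap (flipInv y) 6 = y 6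
    simp only [fm6, fi0, fi1, fi2, fi3, fi4, fi5, fi6, fi7, fi8, fi9, fi10, fi11]
    linarith [e1, e2, e3, e4, e5, e6, e7, e8, p1, p2, p3, p4]

  · show flipMap (flipInv y) 7 = y 7
    simp only [fm7, fi0, fi1, fi2, fi3, fi4, fi5, fi6, fi7, fi8, fi9, fi10, fi11]
    linarith [e1, e2, e3, e4, e5, e6, e7, e8, p1, p2, p3, p4]

  · show flipMap (flipInv y) 8 = y 8
    simp only [fm8, fi0, fi1, fi2, fi3, fi4, fi5, fi6, fi7, fi8, fi9, fi10, fi11]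
    linarith [e1, e2, e3, e4, e5, e6, e7, e8, p1, p2, p3, p4]

  · show flipMap (flipInv y) 9 = y 9
    simp only [fm9, fi0, fi1, fi2, fi3, fi4, fi5, fi6, fi7, fi8, fi9, fi10, fi11]
    linarith [e1, e2, e3, e4, e5, e6, e7, e8, p1, p2, p3, p4]

  · show flipMap (flipInv y) 10 = y 10
    simp only [fm10, fi0, fi1, fi2, fi3, fi4, fi5, fi6, fi7, fi8, fi9, fi10, fi11]
    linarith [e1, e2, e3, e4, e5, e6, e7, e8, p1, p2, p3, p4]

  · show flipMap (flipInv y) 11 = y 11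
    simp only [fm11, fi0, fi1, fi2, fi3, fi4, fi5, fi6, fi7, fi8, fi9, fi10, fi11]
    linarith [e1, e2, e3, e4, e5, e6, e7, e8, p1, p2, p3, p4]


/-- The sl3 flip map as an equivalence. -/
def flipEquiv : (Fin 12 → S) ≃ (Fin 12 → S) where
  toFun := flipMap
  invFun := flipInv
  left_inv := flip_leftInv
  right_inv := flip_rightInv

end Comm

lemma posR_mul {l t : ℝ} (hl : 0 ≤ l) : posR (l * t) = l * posR t := by
  simp [posR, mul_max_of_nonneg _ _ hl]

lemma pos3R_mul {l a b c : ℝ} (hl : 0 ≤ l) :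
    pos3R (l * a) (l * b) (l * c) = l * pos3R a b c := by
  simp [pos3R, mul_max_of_nonneg _ _ hl, mul_add]

lemma flipMap_continuous : Continuous (flipMap (R := ℝ)) := by
  apply continuous_pi
  intro i
  fin_cases i <;>
    first

    | (show Continuous fun x : Fin 12 → ℝ => x 1 + pos3R (x 2) (x 3) (x 0) - pos3R (x 0) (x 1) (x 2)
       simp only [posR, pos3R]
       fun_prop)

    | (show Continuous fun x : Fin 12 → ℝ => -x 0 - x 1 + posR (x 0) - posR (x 2)
       simp only [posR, pos3R]
       fun_prop)

    | (show Continuous fun x : Fin 12 → ℝ => x 3 + pos3R (x 0) (x 1) (x 2) - pos3R (x 2) (x 3) (x 0)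
       simp only [posR, pos3R]
       fun_prop)

    | (show Continuous fun x : Fin 12 → ℝ => -x 2 - x 3 + posR (x 2) - posR (x 0)
       simp only [posR, pos3R]
       fun_prop)

    | (show Continuous fun x : Fin 12 → ℝ => x 4 + posR (x 0)
       simp only [posR, pos3R]
       fun_prop)

    | (show Continuous fun x : Fin 12 → ℝ => x 5 + pos3R (x 0) (x 1) (x 2) - posR (x 0)
       simp only [posR, pos3R]
       fun_prop)

    | (show Continuous fun x : Fin 12 → ℝ => x 6 + x 0 + x 1 + posR (x 2) - pos3R (x 0) (x 1) (x 2)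
       simp only [posR, pos3R]
       fun_prop)

    | (show Continuous fun x : Fin 12 → ℝ => x 7 - posR (-(x 2))
       simp only [posR, pos3R]
       fun_prop)

    | (show Continuous fun x : Fin 12 → ℝ => x 8 + posR (x 2)
       simp only [posR, pos3R]
       fun_prop)

    | (show Continuous fun x : Fin 12 → ℝ => x 9 + pos3R (x 2) (x 3) (x 0) - posR (x 2)
       simp only [posR, pos3R]
       fun_prop)

    | (show Continuous fun x : Fin 12 → ℝ => x 10 + x 2 + x 3 + posR (x 0) - pos3R (x 2) (x 3) (x 0)
       simp only [posR, pos3R]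
       fun_prop)

    | (show Continuous fun x : Fin 12 → ℝ => x 11 - posR (-(x 0))
       simp only [posR, pos3R]
       fun_prop)


lemma flipInv_continuous : Continuous (flipInv (R := ℝ)) := by
  apply continuous_pi
  intro i
  fin_cases i <;>
    first

    | (show Continuous fun y : Fin 12 → ℝ => -y 3 - y 0 + posR (y 3) - posR (y 1)
       simp only [posR, pos3R]
       fun_prop)

    | (show Continuous fun y : Fin 12 → ℝ => y 2 + pos3R (y 3) (y 0) (y 1) - pos3R (y 1) (y 2) (y 3)
       simp only [posR, pos3R]
       fun_prop)

    | (show Continuous fun y : Fin 12 → ℝ => -y 1 - y 2 + posR (y 1) - posR (y 3)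
       simp only [posR, pos3R]
       fun_prop)

    | (show Continuous fun y : Fin 12 → ℝ => y 0 + pos3R (y 1) (y 2) (y 3) - pos3R (y 3) (y 0) (y 1)
       simp only [posR, pos3R]
       fun_prop)

    | (show Continuous fun y : Fin 12 → ℝ => y 4 + y 0 + y 3 + posR (y 1) - pos3R (y 3) (y 0) (y 1)
       simp only [posR, pos3R]
       fun_prop)

    | (show Continuous fun y : Fin 12 → ℝ => y 5 - posR (-(y 1))
       simp only [posR, pos3R]
       fun_prop)

    | (show Continuous fun y : Fin 12 → ℝ => y 6 + posR (y 1)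
       simp only [posR, pos3R]
       fun_prop)

    | (show Continuous fun y : Fin 12 → ℝ => y 7 + pos3R (y 1) (y 2) (y 3) - posR (y 1)
       simp only [posR, pos3R]
       fun_prop)

    | (show Continuous fun y : Fin 12 → ℝ => y 8 + y 1 + y 2 + posR (y 3) - pos3R (y 1) (y 2) (y 3)
       simp only [posR, pos3R]
       fun_prop)

    | (show Continuous fun y : Fin 12 → ℝ => y 9 - posR (-(y 3))
       simp only [posR, pos3R]
       fun_prop)

    | (show Continuous fun y : Fin 12 → ℝ => y 10 + posR (y 3)
       simp only [posR, pos3R]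
       fun_prop)

    | (show Continuous fun y : Fin 12 → ℝ => y 11 + pos3R (y 3) (y 0) (y 1) - posR (y 3)
       simp only [posR, pos3R]
       fun_prop)


lemma flipMap_homog (l : ℝ) (hl : 0 < l) (x : Fin 12 → ℝ) :
    flipMap (fun i => l * x i) = fun i => l * flipMap x i := by
  funext i
  fin_cases i

  · show flipMap (fun i => l * x i) 0 = l * flipMap x 0
    simp only [fm0, ← mul_neg, posR_mul hl.le, pos3R_mul hl.le]
    ring

  · show flipMap (fun i => l * x i) 1 = l * flipMap x 1
    simp only [fm1, ← mul_neg, posR_mul hl.le, pos3R_mul hl.le]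
    ring

  · show flipMap (fun i => l * x i) 2 = l * flipMap x 2
    simp only [fm2, ← mul_neg, posR_mul hl.le, pos3R_mul hl.le]
    ring

  · show flipMap (fun i => l * x i) 3 = l * flipMap x 3
    simp only [fm3, ← mul_neg, posR_mul hl.le, pos3R_mul hl.le]
    ring

  · show flipMap (fun i => l * x i) 4 = l * flipMap x 4
    simp only [fm4, ← mul_neg, posR_mul hl.le, pos3R_mul hl.le]
    ring

  · show flipMap (fun i => l * x i) 5 = l * flipMap x 5
    simp only [fm5, ← mul_neg, posR_mul hl.le, pos3R_mul hl.le]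
    ring

  · show flipMap (fun i => l * x i) 6 = l * flipMap x 6
    simp only [fm6, ← mul_neg, posR_mul hl.le, pos3R_mul hl.le]
    ring

  · show flipMap (fun i => l * x i) 7 = l * flipMap x 7
    simp only [fm7, ← mul_neg, posR_mul hl.le, pos3R_mul hl.le]
    ring

  · show flipMap (fun i => l * x i) 8 = l * flipMap x 8
    simp only [fm8, ← mul_neg, posR_mul hl.le, pos3R_mul hl.le]
    ring

  · show flipMap (fun i => l * x i) 9 = l * flipMap x 9
    simp only [fm9, ← mul_neg, posR_mul hl.le, pos3R_mul hl.le]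
    ring

  · show flipMap (fun i => l * x i) 10 = l * flipMap x 10
    simp only [fm10, ← mul_neg, posR_mul hl.le, pos3R_mul hl.le]
    ring

  · show flipMap (fun i => l * x i) 11 = l * flipMap x 11
    simp only [fm11, ← mul_neg, posR_mul hl.le, pos3R_mul hl.le]
    ring


lemma flipMap_ratCast (x : Fin 12 → ℚ) :
    flipMap (R := ℝ) (fun i => (x i : ℝ)) = fun i => ((flipMap x i : ℚ) : ℝ) := by
  funext i
  fin_cases i

  · show flipMap (R := ℝ) (fun i => (x i : ℝ)) 0 = ((flipMap x 0 : ℚ) : ℝ)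
    simp only [fm0, posR, pos3R]
    push_cast
    ring_nf

  · show flipMap (R := ℝ) (fun i => (x i : ℝ)) 1 = ((flipMap x 1 : ℚ) : ℝ)
    simp only [fm1, posR, pos3R]
    push_cast
    ring_nf

  · show flipMap (R := ℝ) (fun i => (x i : ℝ)) 2 = ((flipMap x 2 : ℚ) : ℝ)
    simp only [fm2, posR, pos3R]
    push_cast
    ring_nf

  · show flipMap (R := ℝ) (fun i => (x i : ℝ)) 3 = ((flipMap x 3 : ℚ) : ℝ)
    simp only [fm3, posR, pos3R]
    push_cast
    ring_nf

  · show flipMap (R := ℝ) (fun i => (x i : ℝ)) 4 = ((flipMap x 4 : ℚ) : ℝ)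
    simp only [fm4, posR, pos3R]
    push_cast
    ring_nf

  · show flipMap (R := ℝ) (fun i => (x i : ℝ)) 5 = ((flipMap x 5 : ℚ) : ℝ)
    simp only [fm5, posR, pos3R]
    push_cast
    ring_nf

  · show flipMap (R := ℝ) (fun i => (x i : ℝ)) 6 = ((flipMap x 6 : ℚ) : ℝ)
    simp only [fm6, posR, pos3R]
    push_cast
    ring_nf

  · show flipMap (R := ℝ) (fun i => (x i : ℝ)) 7 = ((flipMap x 7 : ℚ) : ℝ)
    simp only [fm7, posR, pos3R]
    push_cast
    ring_nf

  · show flipMap (R := ℝ) (fun i => (x i : ℝ)) 8 = ((flipMap x 8 : ℚ) : ℝ)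
    simp only [fm8, posR, pos3R]
    push_cast
    ring_nf

  · show flipMap (R := ℝ) (fun i => (x i : ℝ)) 9 = ((flipMap x 9 : ℚ) : ℝ)
    simp only [fm9, posR, pos3R]
    push_cast
    ring_nf

  · show flipMap (R := ℝ) (fun i => (x i : ℝ)) 10 = ((flipMap x 10 : ℚ) : ℝ)
    simp only [fm10, posR, pos3R]
    push_cast
    ring_nf

  · show flipMap (R := ℝ) (fun i => (x i : ℝ)) 11 = ((flipMap x 11 : ℚ) : ℝ)
    simp only [fm11, posR, pos3R]
    push_cast
    ring_nf


lemma flipMap_intCast (x : Fin 12 → ℤ) :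
    flipMap (R := ℚ) (fun i => ((x i : ℤ) : ℚ)) = fun i => ((flipMap x i : ℤ) : ℚ) := by
  funext i
  fin_cases i

  · show flipMap (R := ℚ) (fun i => ((x i : ℤ) : ℚ)) 0 = ((flipMap x 0 : ℤ) : ℚ)
    simp only [fm0, posR, pos3R]
    push_cast
    ring_nf

  · show flipMap (R := ℚ) (fun i => ((x i : ℤ) : ℚ)) 1 = ((flipMap x 1 : ℤ) : ℚ)
    simp only [fm1, posR, pos3R]
    push_cast
    ring_nf

  · show flipMap (R := ℚ) (fun i => ((x i : ℤ) : ℚ)) 2 = ((flipMap x 2 : ℤ) : ℚ)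
    simp only [fm2, posR, pos3R]
    push_cast
    ring_nf

  · show flipMap (R := ℚ) (fun i => ((x i : ℤ) : ℚ)) 3 = ((flipMap x 3 : ℤ) : ℚ)
    simp only [fm3, posR, pos3R]
    push_cast
    ring_nf

  · show flipMap (R := ℚ) (fun i => ((x i : ℤ) : ℚ)) 4 = ((flipMap x 4 : ℤ) : ℚ)
    simp only [fm4, posR, pos3R]
    push_cast
    ring_nf

  · show flipMap (R := ℚ) (fun i => ((x i : ℤ) : ℚ)) 5 = ((flipMap x 5 : ℤ) : ℚ)
    simp only [fm5, posR, pos3R]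
    push_cast
    ring_nf

  · show flipMap (R := ℚ) (fun i => ((x i : ℤ) : ℚ)) 6 = ((flipMap x 6 : ℤ) : ℚ)
    simp only [fm6, posR, pos3R]
    push_cast
    ring_nf

  · show flipMap (R := ℚ) (fun i => ((x i : ℤ) : ℚ)) 7 = ((flipMap x 7 : ℤ) : ℚ)
    simp only [fm7, posR, pos3R]
    push_cast
    ring_nf

  · show flipMap (R := ℚ) (fun i => ((x i : ℤ) : ℚ)) 8 = ((flipMap x 8 : ℤ) : ℚ)
    simp only [fm8, posR, pos3R]
    push_cast
    ring_nf

  · show flipMap (R := ℚ) (fun i => ((x i : ℤ) : ℚ)) 9 = ((flipMap x 9 : ℤ) : ℚ)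
    simp only [fm9, posR, pos3R]
    push_cast
    ring_nf

  · show flipMap (R := ℚ) (fun i => ((x i : ℤ) : ℚ)) 10 = ((flipMap x 10 : ℤ) : ℚ)
    simp only [fm10, posR, pos3R]
    push_cast
    ring_nf

  · show flipMap (R := ℚ) (fun i => ((x i : ℤ) : ℚ)) 11 = ((flipMap x 11 : ℤ) : ℚ)
    simp only [fm11, posR, pos3R]
    push_cast
    ring_nf


/-- The sl3 flip map is a homeomorphism of `ℝ¹²`, positively homogeneous, and restricts to
bijections of `ℚ¹²` and of `ℤ¹²`. -/
theorem flipMap_homeomorph_homogeneous_rational_integral :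
    (∃ h : Homeomorph (Fin 12 → ℝ) (Fin 12 → ℝ), ⇑h = flipMap (R := ℝ)) ∧
    (∀ l : ℝ, 0 < l → ∀ x : Fin 12 → ℝ,
      flipMap (fun i => l * x i) = fun i => l * flipMap x i) ∧
    (∀ x : Fin 12 → ℚ,
      flipMap (R := ℝ) (fun i => (x i : ℝ)) = fun i => ((flipMap x i : ℚ) : ℝ)) ∧
    Function.Bijective (flipMap (R := ℚ)) ∧
    (∀ x : Fin 12 → ℤ,
      flipMap (R := ℚ) (fun i => ((x i : ℤ) : ℚ)) = fun i => ((flipMap x i : ℤ) : ℚ)) ∧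
    Function.Bijective (flipMap (R := ℤ)) := by
  refine ⟨⟨⟨flipEquiv, flipMap_continuous, flipInv_continuous⟩, rfl⟩,
    flipMap_homog, flipMap_ratCast, flipEquiv.bijective, flipMap_intCast,
    flipEquiv.bijective⟩

end SL3
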